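/- arXiv:math/0306392 — 3 statements merged into one kernel-verified Lean document; each statement's English description precedes it below -/
import Mathlib

section
/- There exist constants C > 0 and ε > 0 such that for all j with 0 < |j| < ε: |S̃(j) − (A(j)²·j₁ − 2·A(j)·j₂ − j₁)| ≤ C·|j|²·(1 + |ln|j||). In other words S̃(j) = A²j₁ − 2Aj₂ − j₁ + O(|j|²·ln|j|). -/
open Real Complex Filter Topology

/-- First partial derivative (direction `1`) of a function on `ℂ ≃ ℝ²`. -/
noncomputable def pd1 (f : ℂ → ℝ) (z : ℂ) : ℝ := fderiv ℝ f z 1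

/-- Second partial derivative (direction `i`) of a function on `ℂ ≃ ℝ²`. -/
noncomputable def pd2 (f : ℂ → ℝ) (z : ℂ) : ℝ := fderiv ℝ f z Complex.I

/-- The period `τ₁(j) = σ₁(j) - ln|j|`. -/
noncomputable def tau1 (σ₁ : ℂ → ℝ) (z : ℂ) : ℝ := σ₁ z - Real.log (‖z‖)

/-- `∂₁τ₁ = ∂₁σ₁ - j₁/|j|²` (extended to the full punctured disc). -/
noncomputable def d1tau1 (σ₁ : ℂ → ℝ) (z : ℂ) : ℝ := pd1 σ₁ z - z.re / ‖z‖ ^ 2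

/-- `∂₂τ₁ = ∂₂σ₁ - j₂/|j|²` (extended to the full punctured disc). -/
noncomputable def d2tau1 (σ₁ : ℂ → ℝ) (z : ℂ) : ℝ := pd2 σ₁ z - z.im / ‖z‖ ^ 2

/-- `∂₂τ₂ = ∂₂σ₂ + j₁/|j|²` (extended to the full punctured disc). -/
noncomputable def d2tau2 (σ₂ : ℂ → ℝ) (z : ℂ) : ℝ := pd2 σ₂ z + z.re / ‖z‖ ^ 2

/-- `A(j) = ∂₂Φ(j) / ∂₁Φ(j)`. -/
noncomputable def Afun (Φ : ℂ → ℝ) (z : ℂ) : ℝ := pd2 Φ z / pd1 Φ z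

/-- The twist: `2π S(j) = -A² ∂₁τ₁ + 2A ∂₂τ₁ - ∂₂τ₂ - τ₁ A ∂₁A + τ₁ ∂₂A`. -/
noncomputable def twoPiS (σ₁ σ₂ Φ : ℂ → ℝ) (z : ℂ) : ℝ :=
  -(Afun Φ z) ^ 2 * d1tau1 σ₁ z + 2 * Afun Φ z * d2tau1 σ₁ z - d2tau2 σ₂ z
    - tau1 σ₁ z * Afun Φ z * pd1 (Afun Φ) z + tau1 σ₁ z * pd2 (Afun Φ) z

/-- `S̃(j) = 2π |j|² S(j)` for `j ≠ 0` and `S̃(0) = 0`. -/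
noncomputable def Stilde (σ₁ σ₂ Φ : ℂ → ℝ) (z : ℂ) : ℝ :=
  if z = 0 then 0 else ‖z‖ ^ 2 * twoPiS σ₁ σ₂ Φ z


lemma pd1_contDiffOn {f : ℂ → ℝ} {U : Set ℂ} (hU : IsOpen U)
    (hf : ContDiffOn ℝ (⊤ : ℕ∞) f U) : ContDiffOn ℝ (⊤ : ℕ∞) (pd1 f) U :=
  (hf.fderiv_of_isOpen hU (by simp)).clm_apply contDiffOn_const

lemma pd2_contDiffOn {f : ℂ → ℝ} {U : Set ℂ} (hU : IsOpen U)
    (hf : ContDiffOn ℝ (⊤ : ℕ∞) f U) : ContDiffOn ℝ (⊤ : ℕ∞) (pd2 f) U :=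
  (hf.fderiv_of_isOpen hU (by simp)).clm_apply contDiffOn_const

/-- `S̃(j) = A(j)² j₁ - 2 A(j) j₂ - j₁ + O(|j|² ln|j|)`. -/
theorem Stilde_expansion (σ₁ σ₂ Φ : ℂ → ℝ) (U : Set ℂ)
    (hUopen : IsOpen U) (hU0 : (0 : ℂ) ∈ U)
    (hσ₁ : ContDiffOn ℝ (⊤ : ℕ∞) σ₁ U) (hσ₂ : ContDiffOn ℝ (⊤ : ℕ∞) σ₂ U)
    (hΦ : ContDiffOn ℝ (⊤ : ℕ∞) Φ U)
    (hΦ1 : ∀ z ∈ U, pd1 Φ z ≠ 0) :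
    ∃ C > 0, ∃ ε > 0, ∀ j : ℂ, 0 < ‖j‖ → ‖j‖ < ε →
      |Stilde σ₁ σ₂ Φ j - ((Afun Φ j) ^ 2 * j.re - 2 * Afun Φ j * j.im - j.re)| ≤
        C * ‖j‖ ^ 2 * (1 + |Real.log (‖j‖)|) := by

  have hA : ContDiffOn ℝ (⊤ : ℕ∞) (Afun Φ) U :=
    (pd2_contDiffOn hUopen hΦ).div (pd1_contDiffOn hUopen hΦ) hΦ1
  have hAc : ContinuousOn (Afun Φ) U := hA.continuousOn
  have hpd1A : ContinuousOn (pd1 (Afun Φ)) U := (pd1_contDiffOn hUopen hA).continuousOn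
  have hpd2A : ContinuousOn (pd2 (Afun Φ)) U := (pd2_contDiffOn hUopen hA).continuousOn
  have hpd1σ : ContinuousOn (pd1 σ₁) U := (pd1_contDiffOn hUopen hσ₁).continuousOn
  have hpd2σ : ContinuousOn (pd2 σ₁) U := (pd2_contDiffOn hUopen hσ₁).continuousOn
  have hpd2σ2 : ContinuousOn (pd2 σ₂) U := (pd2_contDiffOn hUopen hσ₂).continuousOn
  have hσc : ContinuousOn σ₁ U := hσ₁.continuousOn
  set B : ℂ → ℝ := fun z => -(Afun Φ z) ^ 2 * pd1 σ₁ z + 2 * Afun Φ z * pd2 σ₁ z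
      - pd2 σ₂ z - σ₁ z * (Afun Φ z * pd1 (Afun Φ) z - pd2 (Afun Φ) z) with hBdef
  set L : ℂ → ℝ := fun z => Afun Φ z * pd1 (Afun Φ) z - pd2 (Afun Φ) z with hLdef
  have hB : ContinuousOn B U := by
    apply ContinuousOn.sub
    apply ContinuousOn.sub
    · exact ((hAc.pow 2).neg.mul hpd1σ).add ((continuousOn_const.mul hAc).mul hpd2σ)
    · exact hpd2σ2
    · exact hσc.mul ((hAc.mul hpd1A).sub hpd2A)
  have hL : ContinuousOn L U := (hAc.mul hpd1A).sub hpd2A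
  obtain ⟨ε₁, hε₁, hball⟩ := Metric.isOpen_iff.mp hUopen 0 hU0
  set K := Metric.closedBall (0 : ℂ) (ε₁ / 2) with hKdef
  have hKU : K ⊆ U := fun x hx => hball (by
    simp only [hKdef, Metric.mem_closedBall] at hx
    exact Metric.mem_ball.mpr (lt_of_le_of_lt hx (by linarith)))
  have hKc : IsCompact K := isCompact_closedBall _ _
  obtain ⟨M₁, hM₁⟩ := hKc.exists_bound_of_continuousOn (hB.mono hKU)
  obtain ⟨M₂, hM₂⟩ := hKc.exists_bound_of_continuousOn (hL.mono hKU)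
  have h0K : (0 : ℂ) ∈ K := by simp [hKdef]; positivity
  have hM₁0 : 0 ≤ M₁ := le_trans (norm_nonneg _) (hM₁ 0 h0K)
  have hM₂0 : 0 ≤ M₂ := le_trans (norm_nonneg _) (hM₂ 0 h0K)
  refine ⟨max M₁ M₂ + 1, by positivity, ε₁ / 2, by positivity, ?_⟩
  intro j hj1 hj2
  have hj0 : j ≠ 0 := by
    intro h; rw [h] at hj1; simp at hj1
  have hjK : j ∈ K := by
    simp only [hKdef, Metric.mem_closedBall, Complex.dist_eq, sub_zero]
    exact le_of_lt hj2
  have hr0 : (0 : ℝ) < ‖j‖ := hj1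
  have key : Stilde σ₁ σ₂ Φ j
      - ((Afun Φ j) ^ 2 * j.re - 2 * Afun Φ j * j.im - j.re)
      = ‖j‖ ^ 2 * (B j + Real.log (‖j‖) * L j) := by
    simp only [Stilde, if_neg hj0, twoPiS, d1tau1, d2tau1, d2tau2, tau1, hBdef, hLdef]
    field_simp
    ring
  rw [key]
  have hBj : |B j| ≤ M₁ := by simpa [Real.norm_eq_abs] using hM₁ j hjK
  have hLj : |L j| ≤ M₂ := by simpa [Real.norm_eq_abs] using hM₂ j hjK
  have hlog : (0 : ℝ) ≤ |Real.log (‖j‖)| := abs_nonneg _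
  have hmax1 : M₁ ≤ max M₁ M₂ + 1 := by
    have := le_max_left M₁ M₂; linarith
  have hmax2 : M₂ ≤ max M₁ M₂ + 1 := by
    have := le_max_right M₁ M₂; linarith
  have hstep : |B j + Real.log (‖j‖) * L j|
      ≤ (max M₁ M₂ + 1) * (1 + |Real.log (‖j‖)|) := by
    have h1 : |B j + Real.log (‖j‖) * L j|
        ≤ |B j| + |Real.log (‖j‖)| * |L j| := by
      calc |B j + Real.log (‖j‖) * L j|
          ≤ |B j| + |Real.log (‖j‖) * L j| := abs_add_le _ _
        _ = |B j| + |Real.log (‖j‖)| * |L j| := by rw [abs_mul]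
    nlinarith [abs_nonneg (B j), abs_nonneg (L j)]
  calc |‖j‖ ^ 2 * (B j + Real.log (‖j‖) * L j)|
      = ‖j‖ ^ 2 * |B j + Real.log (‖j‖) * L j| := by
        rw [abs_mul, _root_.abs_of_nonneg (by positivity : (0:ℝ) ≤ ‖j‖ ^ 2)]
    _ ≤ ‖j‖ ^ 2 * ((max M₁ M₂ + 1) * (1 + |Real.log (‖j‖)|)) := by
        exact mul_le_mul_of_nonneg_left hstep (by positivity)
    _ = (max M₁ M₂ + 1) * ‖j‖ ^ 2 * (1 + |Real.log (‖j‖)|) := by ring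
end

section
/- Let u, v : ℝ² → ℝ be C^∞ on a neighborhood of 0 with u(0) = 0. Define f(x) = ‖x‖^{u(x)}·e^{v(x)} for x ≠ 0 and f(0) = e^{v(0)}, and φ(x) = f(x)·x. Then φ is differentiable at the origin with derivative Dφ(0) = e^{v(0)}·Id, φ is C^∞ away from the origin, and Dφ(x) → e^{v(0)}·Id as x → 0; that is, φ is C¹ at the origin with Jacobian e^{v(0)}·Id there. -/
open Real Filter Topology

set_option maxHeartbeats 2000000 in
/-- with `f(x) = ‖x‖^{u(x)} e^{v(x)}` (and `f(0) = e^{v(0)}`, `u(0) = 0`),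
the map `φ(x) = f(x)·x` is differentiable at the origin with derivative
`e^{v(0)}·Id`, is `C^∞` away from the origin (on the neighborhood where `u, v` are
smooth), and `Dφ(x) → e^{v(0)}·Id` as `x → 0`; i.e. `φ` is `C¹` at the origin with
Jacobian `e^{v(0)}·Id` there. -/
theorem radial_rescaling_C1_at_origin
    (u v : EuclideanSpace ℝ (Fin 2) → ℝ) (U : Set (EuclideanSpace ℝ (Fin 2)))
    (hUopen : IsOpen U) (hU0 : (0 : EuclideanSpace ℝ (Fin 2)) ∈ U)
    (hu : ContDiffOn ℝ (⊤ : ℕ∞) u U) (hv : ContDiffOn ℝ (⊤ : ℕ∞) v U) (hu0 : u 0 = 0)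
    (f : EuclideanSpace ℝ (Fin 2) → ℝ)
    (hf : ∀ x : EuclideanSpace ℝ (Fin 2), x ≠ 0 →
      f x = Real.exp (u x * Real.log ‖x‖) * Real.exp (v x))
    (hf0 : f 0 = Real.exp (v 0))
    (φ : EuclideanSpace ℝ (Fin 2) → EuclideanSpace ℝ (Fin 2))
    (hφ : ∀ x, φ x = f x • x) :
    HasFDerivAt φ
      (Real.exp (v 0) • ContinuousLinearMap.id ℝ (EuclideanSpace ℝ (Fin 2))) 0 ∧
    ContDiffOn ℝ (⊤ : ℕ∞) φ (U \ {0}) ∧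
    Tendsto (fun x => fderiv ℝ φ x) (𝓝[≠] (0 : EuclideanSpace ℝ (Fin 2)))
      (𝓝 (Real.exp (v 0) • ContinuousLinearMap.id ℝ (EuclideanSpace ℝ (Fin 2)))) := by
  set c := Real.exp (v 0) with hc
  have hUnhds : U ∈ 𝓝 (0 : EuclideanSpace ℝ (Fin 2)) := hUopen.mem_nhds hU0
  -- Lipschitz bound for u near 0
  obtain ⟨K, t, ht, hKlip⟩ :=
    ((hu.contDiffAt hUnhds).of_le (by exact_mod_cast le_top : (1 : WithTop ℕ∞) ≤ ((⊤ : ℕ∞) : WithTop ℕ∞))).exists_lipschitzOnWith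
  have hub : ∀ᶠ x : EuclideanSpace ℝ (Fin 2) in 𝓝 0, |u x| ≤ K * ‖x‖ := by
    filter_upwards [ht] with y hy
    have h0t : (0 : EuclideanSpace ℝ (Fin 2)) ∈ t := mem_of_mem_nhds ht
    have := hKlip.dist_le_mul y hy 0 h0t
    simpa [Real.dist_eq, hu0, dist_zero_right] using this
  -- ‖x‖ tends to 0 within positives
  have hnorm_t : Tendsto (fun x : EuclideanSpace ℝ (Fin 2) => ‖x‖) (𝓝[≠] 0) (𝓝[>] 0) := by
    rw [tendsto_nhdsWithin_iff]
    constructor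
    · exact (continuous_norm.tendsto' 0 0 norm_zero).mono_left nhdsWithin_le_nhds
    · filter_upwards [eventually_mem_nhdsWithin] with x hx
      exact norm_pos_iff.2 hx
  have hg : Tendsto (fun x : EuclideanSpace ℝ (Fin 2) => Real.log ‖x‖ * ‖x‖) (𝓝[≠] 0) (𝓝 0) := by
    have h := tendsto_log_mul_rpow_nhdsGT_zero one_pos
    simp only [Real.rpow_one] at h
    exact h.comp hnorm_t
  -- u x * log ‖x‖ → 0
  have hul : Tendsto (fun x : EuclideanSpace ℝ (Fin 2) => u x * Real.log ‖x‖) (𝓝[≠] 0) (𝓝 0) := by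
    apply squeeze_zero_norm' (a := fun x : EuclideanSpace ℝ (Fin 2) => K * ‖Real.log ‖x‖ * ‖x‖‖)
    · filter_upwards [hub.filter_mono nhdsWithin_le_nhds] with x hx
      have h1 : ‖u x * Real.log ‖x‖‖ = |u x| * |Real.log ‖x‖| := abs_mul _ _
      have h2 : ‖Real.log ‖x‖ * ‖x‖‖ = |Real.log ‖x‖| * ‖x‖ := by
        rw [Real.norm_eq_abs, abs_mul, abs_norm]
      rw [h1, h2]
      calc |u x| * |Real.log ‖x‖| ≤ (K * ‖x‖) * |Real.log ‖x‖| := by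
            apply mul_le_mul_of_nonneg_right hx (abs_nonneg _)
        _ = K * (|Real.log ‖x‖| * ‖x‖) := by ring
    · simpa using hg.norm.const_mul (K : ℝ)
  have hvc : Tendsto v (𝓝 (0 : EuclideanSpace ℝ (Fin 2))) (𝓝 (v 0)) :=
    ((hv.continuousOn).continuousAt hUnhds).tendsto
  have hsum : Tendsto (fun x : EuclideanSpace ℝ (Fin 2) => u x * Real.log ‖x‖ + v x) (𝓝[≠] 0) (𝓝 (v 0)) := by
    simpa using hul.add (hvc.mono_left nhdsWithin_le_nhds)
  have hfeq : ∀ x : EuclideanSpace ℝ (Fin 2), x ≠ 0 → f x = Real.exp (u x * Real.log ‖x‖ + v x) := by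
    intro x hx; rw [hf x hx, ← Real.exp_add]
  have hftends : Tendsto f (𝓝[≠] (0 : EuclideanSpace ℝ (Fin 2))) (𝓝 c) := by
    apply ((Real.continuous_exp.tendsto (v 0)).comp hsum).congr'
    filter_upwards [eventually_mem_nhdsWithin] with x hx
    exact (hfeq x hx).symm
  -- Part 1
  have part1 : HasFDerivAt φ (c • ContinuousLinearMap.id ℝ (EuclideanSpace ℝ (Fin 2))) 0 := by
    rw [hasFDerivAt_iff_isLittleO_nhds_zero]
    rw [Asymptotics.isLittleO_iff]
    intro ε hε
    have h1 : ∀ᶠ x : EuclideanSpace ℝ (Fin 2) in 𝓝 0, x ∈ ({0}ᶜ : Set (EuclideanSpace ℝ (Fin 2))) → dist (f x) c < ε :=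
      eventually_nhdsWithin_iff.mp (Metric.tendsto_nhds.mp hftends ε hε)
    filter_upwards [h1] with x hx
    rcases eq_or_ne x 0 with rfl | hx0
    · simp [hφ, hf0]
    · have hd := hx hx0
      rw [Real.dist_eq] at hd
      have : φ (0 + x) - φ 0 - (c • ContinuousLinearMap.id ℝ (EuclideanSpace ℝ (Fin 2))) x = (f x - c) • x := by
        simp [hφ, sub_smul]
      rw [this, norm_smul, Real.norm_eq_abs]
      exact mul_le_mul_of_nonneg_right hd.le (norm_nonneg _)
  refine ⟨part1, ?_, ?_⟩
  · -- Part 2: smoothness away from 0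
    intro x hx
    obtain ⟨hxU, hx0'⟩ := hx
    have hx0 : x ≠ 0 := hx0'
    have hUx : U ∈ 𝓝 x := hUopen.mem_nhds hxU
    have hsm : ContDiffAt ℝ (⊤ : ℕ∞) (fun y : EuclideanSpace ℝ (Fin 2) => Real.exp (u y * Real.log ‖y‖ + v y) • y) x := by
      have h1 : ContDiffAt ℝ (⊤ : ℕ∞) u x := hu.contDiffAt hUx
      have h2 : ContDiffAt ℝ (⊤ : ℕ∞) v x := hv.contDiffAt hUx
      have h3 : ContDiffAt ℝ (⊤ : ℕ∞) (fun y : EuclideanSpace ℝ (Fin 2) => Real.log ‖y‖) x :=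
        (contDiffAt_norm ℝ hx0).log (norm_ne_zero_iff.2 hx0)
      exact (((h1.mul h3).add h2).exp).smul contDiffAt_id
    have heq : φ =ᶠ[𝓝 x] fun y : EuclideanSpace ℝ (Fin 2) => Real.exp (u y * Real.log ‖y‖ + v y) • y := by
      filter_upwards [isOpen_compl_singleton.mem_nhds hx0] with y hy
      rw [hφ y, hfeq y hy]
    exact ((hsm.congr_of_eventuallyEq heq).contDiffWithinAt)
  · -- Part 3
    set L := c • ContinuousLinearMap.id ℝ (EuclideanSpace ℝ (Fin 2)) with hL
    have key : ∀ x : EuclideanSpace ℝ (Fin 2), x ∈ U → x ≠ 0 →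
        ‖fderiv ℝ φ x - L‖ ≤ |f x - c| +
          |f x| * (‖fderiv ℝ u x‖ * |Real.log ‖x‖ * ‖x‖| + |u x| + ‖x‖ * ‖fderiv ℝ v x‖) := by
      intro x hxU hx0
      have hUx : U ∈ 𝓝 x := hUopen.mem_nhds hxU
      have hxn0 : ‖x‖ ≠ 0 := norm_ne_zero_iff.2 hx0
      have hxnpos : (0:ℝ) < ‖x‖ := norm_pos_iff.2 hx0
      have hux : HasFDerivAt u (fderiv ℝ u x) x :=
        ((hu.contDiffAt hUx).differentiableAt (by simp)).hasFDerivAt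
      have hvx : HasFDerivAt v (fderiv ℝ v x) x :=
        ((hv.contDiffAt hUx).differentiableAt (by simp)).hasFDerivAt
      set N := fderiv ℝ (‖·‖ : EuclideanSpace ℝ (Fin 2) → ℝ) x with hNdef
      have hnx : HasFDerivAt (‖·‖ : EuclideanSpace ℝ (Fin 2) → ℝ) N x :=
        ((contDiffAt_norm ℝ hx0).differentiableAt one_ne_zero).hasFDerivAt
      have hNle : ‖N‖ ≤ 1 := by
        have := norm_fderiv_le_of_lipschitz ℝ (lipschitzWith_one_norm
          (E := EuclideanSpace ℝ (Fin 2))) (x₀ := x)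
        simpa using this
      have hlog : HasFDerivAt (fun y : EuclideanSpace ℝ (Fin 2) => Real.log ‖y‖)
          ((‖x‖)⁻¹ • N) x := hnx.log hxn0
      set W := (u x • ((‖x‖)⁻¹ • N) + Real.log ‖x‖ • fderiv ℝ u x) + fderiv ℝ v x with hWdef
      have hw : HasFDerivAt (fun y : EuclideanSpace ℝ (Fin 2) =>
          u y * Real.log ‖y‖ + v y) W x := (hux.mul hlog).add hvx
      have hfx : HasFDerivAt f (Real.exp (u x * Real.log ‖x‖ + v x) • W) x := by
        apply hw.exp.congr_of_eventuallyEq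
        filter_upwards [isOpen_compl_singleton.mem_nhds hx0] with y hy
        exact hfeq y hy
      have hφeq : φ = fun y => f y • y := funext hφ
      have hφx : HasFDerivAt φ
          (f x • ContinuousLinearMap.id ℝ (EuclideanSpace ℝ (Fin 2)) +
            (Real.exp (u x * Real.log ‖x‖ + v x) • W).smulRight x) x := by
        rw [hφeq]
        exact hfx.smul (hasFDerivAt_id x)
      rw [hφx.fderiv]
      have hefx : Real.exp (u x * Real.log ‖x‖ + v x) = f x := (hfeq x hx0).symm
      rw [hefx]
      have hsplit : f x • ContinuousLinearMap.id ℝ (EuclideanSpace ℝ (Fin 2)) +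
          (f x • W).smulRight x - L
          = (f x - c) • ContinuousLinearMap.id ℝ (EuclideanSpace ℝ (Fin 2)) +
            (f x • W).smulRight x := by
        rw [hL]; module
      rw [hsplit]
      have habs : |Real.log ‖x‖ * ‖x‖| = |Real.log ‖x‖| * ‖x‖ := by
        rw [abs_mul, abs_norm]
      have hWle : ‖W‖ * ‖x‖ ≤ ‖fderiv ℝ u x‖ * |Real.log ‖x‖ * ‖x‖| + |u x| + ‖x‖ * ‖fderiv ℝ v x‖ := by
        have h1 : ‖u x • ((‖x‖)⁻¹ • N)‖ ≤ |u x| * ‖x‖⁻¹ := by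
          rw [norm_smul, norm_smul, Real.norm_eq_abs, Real.norm_eq_abs, abs_inv, abs_norm]
          have : ‖x‖⁻¹ * ‖N‖ ≤ ‖x‖⁻¹ * 1 := by gcongr
          calc |u x| * (‖x‖⁻¹ * ‖N‖) ≤ |u x| * (‖x‖⁻¹ * 1) := by gcongr
            _ = |u x| * ‖x‖⁻¹ := by ring
        have h2 : ‖Real.log ‖x‖ • fderiv ℝ u x‖ = |Real.log ‖x‖| * ‖fderiv ℝ u x‖ := by
          rw [norm_smul, Real.norm_eq_abs]
        have h3 : ‖W‖ ≤ |u x| * ‖x‖⁻¹ + |Real.log ‖x‖| * ‖fderiv ℝ u x‖ + ‖fderiv ℝ v x‖ := by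
          calc ‖W‖ ≤ ‖u x • ((‖x‖)⁻¹ • N) + Real.log ‖x‖ • fderiv ℝ u x‖ + ‖fderiv ℝ v x‖ :=
                norm_add_le _ _
            _ ≤ (‖u x • ((‖x‖)⁻¹ • N)‖ + ‖Real.log ‖x‖ • fderiv ℝ u x‖) + ‖fderiv ℝ v x‖ := by
                gcongr; exact norm_add_le _ _
            _ ≤ _ := by rw [h2]; linarith [h1]
        have hinv : ‖x‖⁻¹ * ‖x‖ = 1 := inv_mul_cancel₀ hxn0
        calc ‖W‖ * ‖x‖ ≤ (|u x| * ‖x‖⁻¹ + |Real.log ‖x‖| * ‖fderiv ℝ u x‖ + ‖fderiv ℝ v x‖) * ‖x‖ := by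
              gcongr
          _ = |u x| * (‖x‖⁻¹ * ‖x‖) + ‖fderiv ℝ u x‖ * (|Real.log ‖x‖| * ‖x‖) + ‖x‖ * ‖fderiv ℝ v x‖ := by
              ring
          _ = ‖fderiv ℝ u x‖ * |Real.log ‖x‖ * ‖x‖| + |u x| + ‖x‖ * ‖fderiv ℝ v x‖ := by
              rw [hinv, habs]; ring
      calc ‖(f x - c) • ContinuousLinearMap.id ℝ (EuclideanSpace ℝ (Fin 2)) +
            (f x • W).smulRight x‖
          ≤ ‖(f x - c) • ContinuousLinearMap.id ℝ (EuclideanSpace ℝ (Fin 2))‖ +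
            ‖(f x • W).smulRight x‖ := norm_add_le _ _
        _ ≤ |f x - c| * 1 + |f x| * (‖W‖ * ‖x‖) := by
            have e1 : ‖(f x - c) • ContinuousLinearMap.id ℝ (EuclideanSpace ℝ (Fin 2))‖
                ≤ |f x - c| * 1 := by
              refine (norm_smul_le (f x - c) (ContinuousLinearMap.id ℝ (EuclideanSpace ℝ (Fin 2)))).trans ?_
              rw [Real.norm_eq_abs]
              gcongr
              exact ContinuousLinearMap.norm_id_le
            have e2 : ‖(f x • W).smulRight x‖ ≤ |f x| * (‖W‖ * ‖x‖) := by
              rw [ContinuousLinearMap.norm_smulRight_apply]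
              have h4 : ‖f x • W‖ ≤ |f x| * ‖W‖ := by
                simpa [Real.norm_eq_abs] using norm_smul_le (f x) W
              calc ‖f x • W‖ * ‖x‖ ≤ (|f x| * ‖W‖) * ‖x‖ :=
                    mul_le_mul_of_nonneg_right h4 (norm_nonneg x)
                _ = |f x| * (‖W‖ * ‖x‖) := by ring
            linarith [e1, e2]
        _ ≤ |f x - c| + |f x| * (‖fderiv ℝ u x‖ * |Real.log ‖x‖ * ‖x‖| + |u x| + ‖x‖ * ‖fderiv ℝ v x‖) := by
            have := mul_le_mul_of_nonneg_left hWle (abs_nonneg (f x))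
            linarith
    rw [tendsto_iff_norm_sub_tendsto_zero]
    apply squeeze_zero_norm' (a := fun x : EuclideanSpace ℝ (Fin 2) => |f x - c| +
        |f x| * (‖fderiv ℝ u x‖ * |Real.log ‖x‖ * ‖x‖| + |u x| + ‖x‖ * ‖fderiv ℝ v x‖))
    · have hU' : ∀ᶠ x : EuclideanSpace ℝ (Fin 2) in 𝓝[≠] 0, x ∈ U := eventually_nhdsWithin_of_eventually_nhds hUnhds
      filter_upwards [hU', eventually_mem_nhdsWithin] with x hxU hx0
      simpa using key x hxU hx0
    · have hDu : Tendsto (fun x : EuclideanSpace ℝ (Fin 2) => ‖fderiv ℝ u x‖) (𝓝[≠] 0) (𝓝 ‖fderiv ℝ u 0‖) := by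
        have := ((hu.continuousOn_fderiv_of_isOpen hUopen ((by exact_mod_cast le_top) : (1:WithTop ℕ∞) ≤ ((⊤ : ℕ∞) : WithTop ℕ∞))).continuousAt
          hUnhds).tendsto
        exact (this.norm).mono_left nhdsWithin_le_nhds
      have hDv : Tendsto (fun x : EuclideanSpace ℝ (Fin 2) => ‖fderiv ℝ v x‖) (𝓝[≠] 0) (𝓝 ‖fderiv ℝ v 0‖) := by
        have := ((hv.continuousOn_fderiv_of_isOpen hUopen ((by exact_mod_cast le_top) : (1:WithTop ℕ∞) ≤ ((⊤ : ℕ∞) : WithTop ℕ∞))).continuousAt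
          hUnhds).tendsto
        exact (this.norm).mono_left nhdsWithin_le_nhds
      have huc : Tendsto (fun x : EuclideanSpace ℝ (Fin 2) => |u x|) (𝓝[≠] 0) (𝓝 0) := by
        have := ((hu.continuousOn.continuousAt hUnhds).tendsto).mono_left
          (nhdsWithin_le_nhds : 𝓝[≠] (0 : EuclideanSpace ℝ (Fin 2)) ≤ 𝓝 0)
        simpa [hu0] using this.abs
      have hxn : Tendsto (fun x : EuclideanSpace ℝ (Fin 2) => ‖x‖) (𝓝[≠] 0) (𝓝 0) :=
        (continuous_norm.tendsto' 0 0 norm_zero).mono_left nhdsWithin_le_nhds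
      have h1 : Tendsto (fun x : EuclideanSpace ℝ (Fin 2) => |f x - c|) (𝓝[≠] 0) (𝓝 0) := by
        have := (hftends.sub_const c).abs
        simpa using this
      have h2 : Tendsto (fun x : EuclideanSpace ℝ (Fin 2) => |f x|) (𝓝[≠] 0) (𝓝 |c|) := hftends.abs
      have := h1.add (h2.mul ((hDu.mul hg.abs).add huc |>.add (hxn.mul hDv)))
      simpa using this
end

section
/- Let u, v : ℝ² → ℝ be C^∞ on a neighborhood of 0 with u(0) = 0. Define f(x) = ‖x‖^{u(x)}·e^{v(x)} for x ≠ 0 and f(0) = e^{v(0)}. Then f is continuous at the origin, and its partial derivatives are of order ln‖x‖ at the origin: there exist C > 0 and ε > 0 such that ‖Df(x)‖ ≤ C·(1 + |ln‖x‖|) for all x with 0 < ‖x‖ < ε. -/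
open Real Filter Topology

private abbrev E' : Type := EuclideanSpace ℝ (Fin 2)

/-- with `f(x) = ‖x‖^{u(x)} e^{v(x)}` (and `f(0) = e^{v(0)}`, `u(0) = 0`),
`f` is continuous at the origin and its derivative is of order `ln‖x‖` at the origin:
`‖Df(x)‖ ≤ C (1 + |ln‖x‖|)` for `0 < ‖x‖ < ε`. -/
theorem radial_rescaling_factor_log_bound
    (u v : EuclideanSpace ℝ (Fin 2) → ℝ) (U : Set (EuclideanSpace ℝ (Fin 2)))
    (hUopen : IsOpen U) (hU0 : (0 : EuclideanSpace ℝ (Fin 2)) ∈ U)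
    (hu : ContDiffOn ℝ (⊤ : ℕ∞) u U) (hv : ContDiffOn ℝ (⊤ : ℕ∞) v U) (hu0 : u 0 = 0)
    (f : EuclideanSpace ℝ (Fin 2) → ℝ)
    (hf : ∀ x : EuclideanSpace ℝ (Fin 2), x ≠ 0 →
      f x = Real.exp (u x * Real.log ‖x‖) * Real.exp (v x))
    (hf0 : f 0 = Real.exp (v 0)) :
    ContinuousAt f 0 ∧
    ∃ C > 0, ∃ ε > 0, ∀ x : EuclideanSpace ℝ (Fin 2), 0 < ‖x‖ → ‖x‖ < ε →
      ‖fderiv ℝ f x‖ ≤ C * (1 + |Real.log ‖x‖|) := by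
  -- f equals g everywhere
  set g : E' → ℝ := fun x => Real.exp (u x * Real.log ‖x‖ + v x) with hg_def
  have hfg : f = g := by
    funext x
    by_cases hx : x = 0
    · subst hx
      simp [hg_def, hf0, hu0]
    · rw [hf x hx, ← Real.exp_add]
  -- choose a closed ball inside U
  obtain ⟨r0, hr0pos, hr0⟩ := Metric.isOpen_iff.1 hUopen 0 hU0
  set r : ℝ := r0 / 2 with hr_def
  have hrpos : 0 < r := by positivity
  have hball : Metric.closedBall (0 : E') r ⊆ U := by
    intro x hx
    apply hr0
    rw [Metric.mem_ball]
    rw [Metric.mem_closedBall] at hx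
    linarith
  -- smoothness on the ball
  have hmemU : ∀ x : E', x ∈ Metric.closedBall (0 : E') r → U ∈ 𝓝 x :=
    fun x hx => hUopen.mem_nhds (hball hx)
  have hdu : ∀ x ∈ Metric.closedBall (0 : E') r, DifferentiableAt ℝ u x :=
    fun x hx => ((hu.contDiffAt (hmemU x hx)).differentiableAt (by simp))
  have hdv : ∀ x ∈ Metric.closedBall (0 : E') r, DifferentiableAt ℝ v x :=
    fun x hx => ((hv.contDiffAt (hmemU x hx)).differentiableAt (by simp))
  -- bounds on the ball
  have hcfu : ContinuousOn (fderiv ℝ u) (Metric.closedBall (0 : E') r) := by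
    have := (hu.continuousOn_fderiv_of_isOpen hUopen (by simp))
    exact this.mono hball
  have hcfv : ContinuousOn (fderiv ℝ v) (Metric.closedBall (0 : E') r) := by
    have := (hv.continuousOn_fderiv_of_isOpen hUopen (by simp))
    exact this.mono hball
  obtain ⟨M1, hM1⟩ := (isCompact_closedBall (0 : E') r).exists_bound_of_continuousOn hcfu
  obtain ⟨M2, hM2⟩ := (isCompact_closedBall (0 : E') r).exists_bound_of_continuousOn hcfv
  obtain ⟨M3, hM3⟩ := (isCompact_closedBall (0 : E') r).exists_bound_of_continuousOn
    ((hv.continuousOn).mono hball)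
  set M : ℝ := max (max M1 M2) (max M3 1) with hM_def
  have hM1' : ∀ x ∈ Metric.closedBall (0 : E') r, ‖fderiv ℝ u x‖ ≤ M :=
    fun x hx => (hM1 x hx).trans (le_max_left _ _ |>.trans (le_max_left _ _))
  have hM2' : ∀ x ∈ Metric.closedBall (0 : E') r, ‖fderiv ℝ v x‖ ≤ M :=
    fun x hx => (hM2 x hx).trans (le_max_right _ _ |>.trans (le_max_left _ _))
  have hM3' : ∀ x ∈ Metric.closedBall (0 : E') r, |v x| ≤ M :=
    fun x hx => (hM3 x hx).trans (le_max_left _ _ |>.trans (le_max_right _ _))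
  have hM1le : (1:ℝ) ≤ M := le_max_right _ _ |>.trans (le_max_right _ _)
  have hMpos : (0:ℝ) < M := lt_of_lt_of_le one_pos hM1le
  -- Lipschitz bound on u
  have hulip : ∀ x ∈ Metric.closedBall (0 : E') r, |u x| ≤ M * ‖x‖ := by
    intro x hx
    have := Convex.norm_image_sub_le_of_norm_fderiv_le hdu hM1'
      (convex_closedBall (0:E') r) (Metric.mem_closedBall_self hrpos.le) hx
    simpa [hu0] using this
  -- x * |log x| ≤ 1 for 0 < x < 1
  have hxlog : ∀ t : ℝ, 0 < t → t < 1 → t * |Real.log t| ≤ 1 := by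
    intro t ht0 ht1
    rw [abs_of_neg (Real.log_neg ht0 ht1)]
    have h1 : -Real.log t = Real.log t⁻¹ := (Real.log_inv t).symm
    have h2 : Real.log t⁻¹ ≤ t⁻¹ - 1 := Real.log_le_sub_one_of_pos (inv_pos.2 ht0)
    have h3 : t * -Real.log t ≤ t * t⁻¹ := by
      rw [h1]
      have : Real.log t⁻¹ ≤ t⁻¹ := h2.trans (by linarith [inv_pos.2 ht0])
      nlinarith
    rwa [mul_inv_cancel₀ ht0.ne'] at h3
  -- Continuity at 0
  have htnorm : Tendsto (fun x : E' => ‖x‖) (𝓝[≠] (0:E')) (𝓝[>] 0) := by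
    rw [tendsto_nhdsWithin_iff]
    constructor
    · exact tendsto_norm_zero.mono_left nhdsWithin_le_nhds
    · exact eventually_mem_nhdsWithin.mono fun x hx => by
        simpa [Set.mem_Ioi, norm_pos_iff] using hx
  have htlog : Tendsto (fun x : E' => ‖x‖ * |Real.log ‖x‖|) (𝓝[≠] (0:E')) (𝓝 0) := by
    have h1 : Tendsto (fun t : ℝ => Real.log t * t) (𝓝[>] 0) (𝓝 0) := by
      simpa using tendsto_log_mul_rpow_nhdsGT_zero one_pos
    have h2 := (h1.comp htnorm).abs
    rw [abs_zero] at h2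
    refine h2.congr (fun x => ?_)
    rw [Function.comp_apply, abs_mul, abs_norm, mul_comm]
  have htu : Tendsto (fun x : E' => u x * Real.log ‖x‖) (𝓝[≠] (0:E')) (𝓝 0) := by
    have hev : ∀ᶠ x : E' in 𝓝[≠] (0:E'), ‖u x * Real.log ‖x‖‖ ≤ M * (‖x‖ * |Real.log ‖x‖|) := by
      have hball_ev : Metric.closedBall (0:E') r ∈ 𝓝[≠] (0:E') :=
        nhdsWithin_le_nhds (Metric.closedBall_mem_nhds _ hrpos)
      filter_upwards [hball_ev] with x hx
      rw [Real.norm_eq_abs, abs_mul]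
      calc |u x| * |Real.log ‖x‖| ≤ (M * ‖x‖) * |Real.log ‖x‖| :=
            mul_le_mul_of_nonneg_right (hulip x hx) (abs_nonneg _)
        _ = M * (‖x‖ * |Real.log ‖x‖|) := by ring
    have := htlog.const_mul M
    rw [mul_zero] at this
    exact squeeze_zero_norm' hev this
  have hvcont : ContinuousAt v 0 :=
    (hv.continuousOn.continuousAt (hUopen.mem_nhds hU0))
  have htg : Tendsto g (𝓝[≠] (0:E')) (𝓝 (g 0)) := by
    have hth : Tendsto (fun x : E' => u x * Real.log ‖x‖ + v x) (𝓝[≠] (0:E')) (𝓝 (0 + v 0)) :=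
      htu.add (hvcont.tendsto.mono_left nhdsWithin_le_nhds)
    have := (Real.continuous_exp.continuousAt (x := 0 + v 0)).tendsto.comp hth
    have hg0 : g 0 = Real.exp (0 + v 0) := by simp [hg_def, hu0]
    rw [hg0]
    exact this
  have hcont : ContinuousAt f 0 := by
    rw [hfg]
    rw [ContinuousAt, ← nhdsNE_sup_pure (0:E'), tendsto_sup]
    exact ⟨htg, tendsto_pure_nhds g 0⟩
  refine ⟨hcont, 2 * M * Real.exp (2 * M), by positivity, min r 1, lt_min hrpos one_pos, ?_⟩
  intro x hx0 hxlt
  have hxr : x ∈ Metric.closedBall (0:E') r := by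
    rw [Metric.mem_closedBall, dist_zero_right]
    exact le_of_lt (lt_of_lt_of_le hxlt (min_le_left _ _))
  have hx1 : ‖x‖ < 1 := lt_of_lt_of_le hxlt (min_le_right _ _)
  have hxne : x ≠ 0 := norm_pos_iff.1 hx0
  have hnne : ‖x‖ ≠ 0 := hx0.ne'
  -- derivative of the norm
  have hn : HasFDerivAt (fun y : E' => ‖y‖) (fderiv ℝ (fun y : E' => ‖y‖) x) x :=
    (((contDiffAt_norm ℝ hxne (n := 1)).differentiableAt one_ne_zero)).hasFDerivAt
  have hnbd : ‖fderiv ℝ (fun y : E' => ‖y‖) x‖ ≤ 1 := by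
    simpa using norm_fderiv_le_of_lipschitz ℝ lipschitzWith_one_norm (x₀ := x)
  have hlog : HasDerivAt Real.log (‖x‖)⁻¹ ‖x‖ := Real.hasDerivAt_log hnne
  have hL : HasFDerivAt (fun y : E' => Real.log ‖y‖)
      ((‖x‖)⁻¹ • fderiv ℝ (fun y : E' => ‖y‖) x) x := hlog.comp_hasFDerivAt x hn
  have hu' : HasFDerivAt u (fderiv ℝ u x) x := (hdu x hxr).hasFDerivAt
  have hv' : HasFDerivAt v (fderiv ℝ v x) x := (hdv x hxr).hasFDerivAt
  have hh : HasFDerivAt (fun y : E' => u y * Real.log ‖y‖ + v y)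
      ((u x • ((‖x‖)⁻¹ • fderiv ℝ (fun y : E' => ‖y‖) x) + Real.log ‖x‖ • fderiv ℝ u x)
        + fderiv ℝ v x) x := (hu'.mul hL).add hv'
  have hgd : HasFDerivAt g
      (Real.exp (u x * Real.log ‖x‖ + v x) •
        ((u x • ((‖x‖)⁻¹ • fderiv ℝ (fun y : E' => ‖y‖) x) + Real.log ‖x‖ • fderiv ℝ u x)
          + fderiv ℝ v x)) x := hh.exp
  rw [hfg, hgd.fderiv]
  -- bound the exponential factor
  have hub : |u x| ≤ M * ‖x‖ := hulip x hxr
  have hexp_arg : u x * Real.log ‖x‖ + v x ≤ 2 * M := by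
    have h1 : u x * Real.log ‖x‖ ≤ |u x * Real.log ‖x‖| := le_abs_self _
    have h2 : |u x * Real.log ‖x‖| ≤ (M * ‖x‖) * |Real.log ‖x‖| := by
      rw [abs_mul]
      exact mul_le_mul_of_nonneg_right hub (abs_nonneg _)
    have h3 : (M * ‖x‖) * |Real.log ‖x‖| ≤ M * 1 := by
      have := hxlog ‖x‖ hx0 hx1
      nlinarith
    have h4 : v x ≤ M := (le_abs_self _).trans (hM3' x hxr)
    linarith
  have hexp_le : Real.exp (u x * Real.log ‖x‖ + v x) ≤ Real.exp (2 * M) :=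
    Real.exp_le_exp.2 hexp_arg
  -- bound the linear-map factor
  have hDbd : ‖(u x • ((‖x‖)⁻¹ • fderiv ℝ (fun y : E' => ‖y‖) x) + Real.log ‖x‖ • fderiv ℝ u x)
      + fderiv ℝ v x‖ ≤ 2 * M * (1 + |Real.log ‖x‖|) := by
    have t1 : ‖u x • ((‖x‖)⁻¹ • fderiv ℝ (fun y : E' => ‖y‖) x)‖ ≤ M := by
      rw [norm_smul, norm_smul, Real.norm_eq_abs, Real.norm_eq_abs, abs_inv, abs_norm]
      calc |u x| * ((‖x‖)⁻¹ * ‖fderiv ℝ (fun y : E' => ‖y‖) x‖)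
          ≤ (M * ‖x‖) * ((‖x‖)⁻¹ * 1) := by
            apply mul_le_mul hub _ (by positivity) (by positivity)
            exact mul_le_mul_of_nonneg_left hnbd (by positivity)
        _ = M := by field_simp
    have t2 : ‖Real.log ‖x‖ • fderiv ℝ u x‖ ≤ |Real.log ‖x‖| * M := by
      rw [norm_smul, Real.norm_eq_abs]
      exact mul_le_mul_of_nonneg_left (hM1' x hxr) (abs_nonneg _)
    have t3 : ‖fderiv ℝ v x‖ ≤ M := hM2' x hxr
    calc ‖(u x • ((‖x‖)⁻¹ • fderiv ℝ (fun y : E' => ‖y‖) x) + Real.log ‖x‖ • fderiv ℝ u x)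
        + fderiv ℝ v x‖
        ≤ ‖u x • ((‖x‖)⁻¹ • fderiv ℝ (fun y : E' => ‖y‖) x)‖ + ‖Real.log ‖x‖ • fderiv ℝ u x‖
          + ‖fderiv ℝ v x‖ := norm_add₃_le
      _ ≤ M + |Real.log ‖x‖| * M + M := by linarith
      _ ≤ 2 * M * (1 + |Real.log ‖x‖|) := by nlinarith [abs_nonneg (Real.log ‖x‖)]
  rw [norm_smul, Real.norm_eq_abs, Real.abs_exp]
  calc Real.exp (u x * Real.log ‖x‖ + v x) *
        ‖(u x • ((‖x‖)⁻¹ • fderiv ℝ (fun y : E' => ‖y‖) x) + Real.log ‖x‖ • fderiv ℝ u x)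
          + fderiv ℝ v x‖
      ≤ Real.exp (2 * M) * (2 * M * (1 + |Real.log ‖x‖|)) :=
        mul_le_mul hexp_le hDbd (norm_nonneg _) (Real.exp_pos _).le
    _ = 2 * M * Real.exp (2 * M) * (1 + |Real.log ‖x‖|) := by ring
end
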